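/- arXiv:math-ph/0008010 — 3 statements merged into one kernel-verified Lean document; each statement's English description precedes it below -/
import Mathlib

section
/- Let h > 0 and let f : ℝ → ℝ be continuously differentiable on (-h, h) with f(0) = 0. Then ∫_{-h}^{h} t^{-2} |f(t)|^2 dt ≤ 4 ∫_{-h}^{h} |f'(t)|^2 dt. -/
/-!
On `(0, h)`, the derivative of `f(t)² / t` is `2 f f' / t - f² / t²`, and completing the square,
`(f / t - 2 f')² ≥ 0`, bounds `f² / t²` by `4 f'²` minus twice that derivative. Integrating over
`[δ, h - δ]` leaves the boundary term `2 f(δ)² / δ`, which tends to `0` because `f(δ) → 0` while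
`f(δ) / δ → f'(0)`. Reflecting `t ↦ -t` gives the same bound on `(-h, 0)`.
-/

open MeasureTheory Set Filter Topology
open scoped ENNReal

lemma setLIntegral_Ioo_eq_add {μ : Measure ℝ} [NullSingletonClass μ] {a b c : ℝ} (hab : a ≤ b) (hbc : b < c)
    (F : ℝ → ℝ≥0∞) :
    ∫⁻ t in Ioo a c, F t ∂μ = (∫⁻ t in Ioo a b, F t ∂μ) + ∫⁻ t in Ioo b c, F t ∂μ := by
  rw [← Ioc_union_Ioo_eq_Ioo hab hbc,
    lintegral_union measurableSet_Ioo ((Ioc_disjoint_Ioi le_rfl).mono_right Ioo_subset_Ioi_self),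
    setLIntegral_congr (Ioo_ae_eq_Ioc (a := a))]

lemma setLIntegral_Ioo_comp_neg (a b : ℝ) (F : ℝ → ℝ≥0∞) :
    ∫⁻ t in Ioo a b, F (-t) = ∫⁻ t in Ioo (-b) (-a), F t := by
  have := (Measure.measurePreserving_neg volume).setLIntegral_comp_preimage_emb
    (Homeomorph.neg ℝ).measurableEmbedding F (Ioo (-b) (-a))
  rwa [neg_preimage, neg_Ioo, neg_neg, neg_neg] at this

lemma ofReal_intervalIntegral_eq_setLIntegral_Ioo {μ : Measure ℝ} [NullSingletonClass μ] {g : ℝ → ℝ}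
    {a b : ℝ} (hab : a ≤ b) (hg : IntervalIntegrable g μ a b) (hg0 : 0 ≤ g) :
    ENNReal.ofReal (∫ t in a..b, g t ∂μ) = ∫⁻ t in Ioo a b, ENNReal.ofReal (g t) ∂μ := by
  rw [intervalIntegral.integral_of_le hab, restrict_Ioo_eq_restrict_Ioc,
    ofReal_integral_eq_lintegral_ofReal ((intervalIntegrable_iff_integrableOn_Ioc_of_le hab).1 hg)
      (ae_of_all _ hg0)]

lemma tendsto_sq_div_nhdsNE_zero {f : ℝ → ℝ} {c : ℝ} (hd : HasDerivAt f c 0) (hf0 : f 0 = 0) :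
    Tendsto (fun t => f t ^ 2 / t) (𝓝[≠] 0) (𝓝 0) := by
  have hf := hd.continuousAt.tendsto.mono_left (nhdsWithin_le_nhds (s := {0}ᶜ))
  rw [hf0] at hf
  have := hf.mul (hasDerivAt_iff_tendsto_slope.1 hd)
  rw [zero_mul] at this
  refine this.congr fun t => ?_
  rw [slope_def_field, hf0, sub_zero, sub_zero, sq, mul_div_assoc]

lemma sq_div_sq_le_four_mul_sq_sub (a b t : ℝ) :
    a ^ 2 / t ^ 2 ≤ 4 * b ^ 2 - 2 * (2 * a * b / t - a ^ 2 / t ^ 2) := by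
  have key : 4 * b ^ 2 - 2 * (2 * a * b / t - a ^ 2 / t ^ 2) =
      a ^ 2 / t ^ 2 + (a / t - 2 * b) ^ 2 := by
    ring
  rw [key]
  exact le_add_of_nonneg_right (sq_nonneg _)

lemma hasDerivAt_sq_div {f : ℝ → ℝ} {c t : ℝ} (hd : HasDerivAt f c t) (ht : t ≠ 0) :
    HasDerivAt (fun s => f s ^ 2 / s) (2 * f t * c / t - f t ^ 2 / t ^ 2) t := by
  refine ((hd.fun_pow 2).fun_div (hasDerivAt_id' t) ht).congr_deriv ?_
  field_simp
  ring

section Truncated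

variable {f f' : ℝ → ℝ} {δ b : ℝ}

lemma integral_sq_div_sq_le_add (hδ : 0 < δ) (hδb : δ ≤ b)
    (hd : ∀ t ∈ Icc δ b, HasDerivAt f (f' t) t) (hc : ContinuousOn f' (Icc δ b)) :
    ∫ t in δ..b, f t ^ 2 / t ^ 2 ≤ 4 * (∫ t in δ..b, f' t ^ 2) + 2 * (f δ ^ 2 / δ) := by
  have ht0 : ∀ t ∈ Icc δ b, t ≠ 0 := fun t ht => (hδ.trans_le ht.1).ne'
  have hfc : ContinuousOn f (Icc δ b) := fun t ht => (hd t ht).continuousAt.continuousWithinAt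
  have hq : ContinuousOn (fun t => f t ^ 2 / t ^ 2) (Icc δ b) :=
    (hfc.fun_pow 2).div (continuousOn_id.fun_pow 2) fun t ht => pow_ne_zero 2 (ht0 t ht)
  have hg' : ContinuousOn (fun t => 2 * f t * f' t / t - f t ^ 2 / t ^ 2) (Icc δ b) :=
    (((continuousOn_const.mul hfc).mul hc).div continuousOn_id ht0).sub hq
  have ftc :
      ∫ t in δ..b, (2 * f t * f' t / t - f t ^ 2 / t ^ 2) = f b ^ 2 / b - f δ ^ 2 / δ := by
    refine intervalIntegral.integral_eq_sub_of_hasDerivAt (f := fun s => f s ^ 2 / s)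
      (fun t ht => ?_) (hg'.intervalIntegrable_of_Icc hδb)
    rw [uIcc_of_le hδb] at ht
    exact hasDerivAt_sq_div (hd t ht) (ht0 t ht)
  have hf'2 := (hc.fun_pow 2).intervalIntegrable_of_Icc (μ := volume) hδb
  have hmono := intervalIntegral.integral_mono_on hδb (hq.intervalIntegrable_of_Icc hδb)
    ((hf'2.const_mul 4).sub ((hg'.intervalIntegrable_of_Icc hδb).const_mul 2))
    fun t _ => sq_div_sq_le_four_mul_sq_sub (f t) (f' t) t
  rw [intervalIntegral.integral_sub (hf'2.const_mul 4)
    ((hg'.intervalIntegrable_of_Icc hδb).const_mul 2), intervalIntegral.integral_const_mul,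
    intervalIntegral.integral_const_mul, ftc] at hmono
  have hb : 0 ≤ f b ^ 2 / b := div_nonneg (sq_nonneg _) (hδ.le.trans hδb)
  linarith

lemma setLIntegral_Ioo_sq_div_sq_le_add (hδ : 0 < δ) (hδb : δ ≤ b)
    (hd : ∀ t ∈ Icc δ b, HasDerivAt f (f' t) t) (hc : ContinuousOn f' (Icc δ b)) :
    ∫⁻ t in Ioo δ b, ENNReal.ofReal (f t ^ 2 / t ^ 2) ≤
      4 * (∫⁻ t in Ioo δ b, ENNReal.ofReal (f' t ^ 2)) + ENNReal.ofReal (2 * (f δ ^ 2 / δ)) := by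
  have hfc : ContinuousOn f (Icc δ b) := fun t ht => (hd t ht).continuousAt.continuousWithinAt
  have hq : ContinuousOn (fun t => f t ^ 2 / t ^ 2) (Icc δ b) :=
    (hfc.fun_pow 2).div (continuousOn_id.fun_pow 2) fun t ht => pow_ne_zero 2 (hδ.trans_le ht.1).ne'
  rw [← ofReal_intervalIntegral_eq_setLIntegral_Ioo hδb (hq.intervalIntegrable_of_Icc hδb)
      fun t => by positivity,
    ← ofReal_intervalIntegral_eq_setLIntegral_Ioo hδb ((hc.fun_pow 2).intervalIntegrable_of_Icc hδb)
      fun t => sq_nonneg _,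
    ← ENNReal.ofReal_ofNat 4, ← ENNReal.ofReal_mul (by norm_num)]
  exact (ENNReal.ofReal_le_ofReal (integral_sq_div_sq_le_add hδ hδb hd hc)).trans
    ENNReal.ofReal_add_le

end Truncated

lemma setLIntegral_Ioo_zero_sq_div_sq_le {h : ℝ} (hh : 0 < h) {f f' : ℝ → ℝ}
    (hd : ∀ t ∈ Ico 0 h, HasDerivAt f (f' t) t) (hc : ContinuousOn f' (Ioo 0 h)) (hf0 : f 0 = 0) :
    ∫⁻ t in Ioo 0 h, ENNReal.ofReal (f t ^ 2 / t ^ 2) ≤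
      4 * ∫⁻ t in Ioo 0 h, ENNReal.ofReal (f' t ^ 2) := by
  have hfc : ContinuousOn f (Ioo 0 h) := fun t ht =>
    (hd t (Ioo_subset_Ico_self ht)).continuousAt.continuousWithinAt
  have hq : ContinuousOn (fun t => f t ^ 2 / t ^ 2) (Ioo 0 h) :=
    (hfc.fun_pow 2).div (continuousOn_id.fun_pow 2) fun t ht => pow_ne_zero 2 ht.1.ne'
  have hlo : Tendsto (fun δ : ℝ => δ) (𝓝[>] 0) (𝓝 0) := nhdsWithin_le_nhds
  have hhi : Tendsto (fun δ : ℝ => h - δ) (𝓝[>] 0) (𝓝 h) := by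
    simpa using tendsto_const_nhds.sub hlo
  have hlim := (aecover_Ioo_of_Ioo (μ := volume) hlo hhi).lintegral_tendsto_of_countably_generated
    (f := fun t => ENNReal.ofReal (f t ^ 2 / t ^ 2))
    (hq.aemeasurable measurableSet_Ioo).ennreal_ofReal
  have hbdry : Tendsto (fun δ => ENNReal.ofReal (2 * (f δ ^ 2 / δ))) (𝓝[>] 0) (𝓝 0) := by
    simpa only [mul_zero, ENNReal.ofReal_zero] using ENNReal.tendsto_ofReal
      (((tendsto_sq_div_nhdsNE_zero (hd 0 ⟨le_rfl, hh⟩) hf0).mono_left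
        (nhdsWithin_mono 0 fun t (ht : t ∈ Ioi 0) => ht.ne')).const_mul 2)
  refine le_of_tendsto_of_tendsto hlim
    (by simpa only [add_zero] using tendsto_const_nhds.add hbdry) ?_
  filter_upwards [Ioo_mem_nhdsGT (half_pos hh)] with δ ⟨hδ0, hδh⟩
  have hsub : Icc δ (h - δ) ⊆ Ioo 0 h := Icc_subset_Ioo hδ0 (by linarith)
  calc ∫⁻ t in Ioo δ (h - δ), ENNReal.ofReal (f t ^ 2 / t ^ 2) ∂volume.restrict (Ioo 0 h)
      ≤ ∫⁻ t in Ioo δ (h - δ), ENNReal.ofReal (f t ^ 2 / t ^ 2) :=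
        lintegral_mono' (Measure.restrict_mono le_rfl Measure.restrict_le_self) le_rfl
    _ ≤ 4 * (∫⁻ t in Ioo δ (h - δ), ENNReal.ofReal (f' t ^ 2)) +
          ENNReal.ofReal (2 * (f δ ^ 2 / δ)) :=
        setLIntegral_Ioo_sq_div_sq_le_add hδ0 (by linarith)
          (fun t ht => hd t (Ioo_subset_Ico_self (hsub ht))) (hc.mono hsub)
    _ ≤ _ := by
        gcongr 4 * ?_ + _
        exact lintegral_mono_set (Ioo_subset_Ioo hδ0.le (by linarith))

lemma setLIntegral_Ioo_neg_sq_div_sq_le {h : ℝ} (hh : 0 < h) {f f' : ℝ → ℝ}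
    (hd : ∀ t ∈ Ioc (-h) 0, HasDerivAt f (f' t) t) (hc : ContinuousOn f' (Ioo (-h) 0))
    (hf0 : f 0 = 0) :
    ∫⁻ t in Ioo (-h) 0, ENNReal.ofReal (f t ^ 2 / t ^ 2) ≤
      4 * ∫⁻ t in Ioo (-h) 0, ENNReal.ofReal (f' t ^ 2) := by
  have hmem : ∀ t ∈ Ico 0 h, -t ∈ Ioc (-h) 0 := fun t ht => ⟨neg_lt_neg ht.2, neg_nonpos.2 ht.1⟩
  have hrefl := setLIntegral_Ioo_zero_sq_div_sq_le hh (f := fun s => f (-s))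
    (f' := fun s => -f' (-s))
    (fun t ht => ((hd (-t) (hmem t ht)).comp t (hasDerivAt_neg' t)).congr_deriv (mul_neg_one _))
    (hc.comp continuous_neg.continuousOn fun t ht => ⟨neg_lt_neg ht.2, neg_lt_zero.2 ht.1⟩).neg
    (by rwa [neg_zero])
  have hcomp := setLIntegral_Ioo_comp_neg 0 h
  rw [neg_zero] at hcomp
  rw [← hcomp, ← hcomp]
  simpa only [neg_sq] using hrefl

theorem hardy_type_inequality (h : ℝ) (hh : 0 < h) (f f' : ℝ → ℝ)
    (hderiv : ∀ t ∈ Ioo (-h) h, HasDerivAt f (f' t) t)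
    (hcont : ContinuousOn f' (Ioo (-h) h))
    (hf0 : f 0 = 0) :
    ∫⁻ t in Ioo (-h) h, ENNReal.ofReal (|f t| ^ 2 / t ^ 2) ≤
      4 * ∫⁻ t in Ioo (-h) h, ENNReal.ofReal (|f' t| ^ 2) := by
  have hneg : Ioc (-h) 0 ⊆ Ioo (-h) h := Ioc_subset_Ioo_right hh
  have hpos : Ico 0 h ⊆ Ioo (-h) h := Ico_subset_Ioo_left (neg_lt_zero.2 hh)
  simp only [sq_abs]
  have h0 : -h ≤ 0 := neg_nonpos.2 hh.le
  rw [setLIntegral_Ioo_eq_add h0 hh, setLIntegral_Ioo_eq_add h0 hh, mul_add]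
  exact add_le_add
    (setLIntegral_Ioo_neg_sq_div_sq_le hh (fun t ht => hderiv t (hneg ht))
      (hcont.mono (Ioo_subset_Ioc_self.trans hneg)) hf0)
    (setLIntegral_Ioo_zero_sq_div_sq_le hh (fun t ht => hderiv t (hpos ht))
      (hcont.mono (Ioo_subset_Ico_self.trans hpos)) hf0)
end

section
/- For every ξ ∈ ℝ^3 and every R > 0 there exist θ, θ' ∈ ℂ^3 with θ · θ = 1, θ' · θ' = 1, θ' - θ = ξ (componentwise, viewing ξ as an element of ℂ^3), and |θ| ≥ R. -/
/-!
Write `θ = x + i y` and `θ' = x' + i y` with real `x, x', y`. Then `θ · θ = x·x - y·y + 2i x·y`,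
so it suffices to take `x = a u - ξ/2`, `x' = a u + ξ/2`, `y = b v`, where `u, v` is a real orthonormal
pair orthogonal to `ξ` (it exists because `ξ^⊥` has dimension at least 2) and
`a² - b² + |ξ|²/4 = 1`, e.g. `a² = 1 + R²`, `b² = R² + |ξ|²/4`. Then `|θ| ≥ |y| = b ≥ R`.
-/

section

variable {ι : Type*} [Fintype ι]

theorem real_inner_eq_dotProduct (x y : EuclideanSpace ℝ ι) :
    inner ℝ x y = x.ofLp ⬝ᵥ y.ofLp := by
  rw [EuclideanSpace.inner_eq_star_dotProduct, star_trivial, dotProduct_comm]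

theorem exists_orthonormal_pair_orthogonal (ξ : ι → ℝ) (hι : 3 ≤ Fintype.card ι) :
    ∃ u v : ι → ℝ, u ⬝ᵥ u = 1 ∧ v ⬝ᵥ v = 1 ∧ u ⬝ᵥ v = 0 ∧ u ⬝ᵥ ξ = 0 ∧ v ⬝ᵥ ξ = 0 := by
  set L : Submodule ℝ (EuclideanSpace ℝ ι) := ℝ ∙ WithLp.toLp 2 ξ
  have two_le_finrank : 2 ≤ Module.finrank ℝ Lᗮ := by
    have h := L.finrank_add_finrank_orthogonal
    have hL : Module.finrank ℝ L ≤ 1 := by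
      simpa using finrank_span_le_card ({WithLp.toLp 2 ξ} : Set (EuclideanSpace ℝ ι))
    rw [finrank_euclideanSpace] at h
    omega
  set b := stdOrthonormalBasis ℝ Lᗮ
  have hb := b.orthonormal.comp_linearIsometry Lᗮ.subtypeₗᵢ
  rw [orthonormal_iff_ite] at hb
  have hdot i j : (b i : EuclideanSpace ℝ ι).ofLp ⬝ᵥ (b j : EuclideanSpace ℝ ι).ofLp =
      if i = j then 1 else 0 := by
    rw [← real_inner_eq_dotProduct]
    exact hb i j
  have hperp i : (b i : EuclideanSpace ℝ ι).ofLp ⬝ᵥ ξ = 0 := by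
    rw [dotProduct_comm, ← real_inner_eq_dotProduct (WithLp.toLp 2 ξ)]
    exact Submodule.inner_right_of_mem_orthogonal (Submodule.mem_span_singleton_self _) (b i).2
  exact ⟨(b ⟨0, by omega⟩ : EuclideanSpace ℝ ι).ofLp, (b ⟨1, by omega⟩ : EuclideanSpace ℝ ι).ofLp,
    by simp [hdot], by simp [hdot], by simp [hdot], hperp _, hperp _⟩

theorem real_dotProduct_self_nonneg (x : ι → ℝ) : 0 ≤ x ⬝ᵥ x :=
  Finset.sum_nonneg fun j _ => mul_self_nonneg (x j)

theorem sum_mk_sq (x y : ι → ℝ) :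
    ∑ j, (⟨x j, y j⟩ : ℂ) ^ 2 = ⟨x ⬝ᵥ x - y ⬝ᵥ y, 2 * (x ⬝ᵥ y)⟩ := by
  refine Complex.ext ?_ ?_
  · simp [sq, Complex.re_sum, Finset.sum_sub_distrib, dotProduct]
  · simp only [sq, Complex.im_sum, Complex.mul_im, dotProduct, Finset.mul_sum]
    exact Finset.sum_congr rfl fun j _ => by ring

theorem sum_norm_mk_sq (x y : ι → ℝ) :
    ∑ j, ‖(⟨x j, y j⟩ : ℂ)‖ ^ 2 = x ⬝ᵥ x + y ⬝ᵥ y := by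
  simp [Complex.sq_norm, Complex.normSq_mk, dotProduct, Finset.sum_add_distrib]

theorem sum_mk_sq_eq_one_of_orthonormal {u v ξ : ι → ℝ} (huu : u ⬝ᵥ u = 1) (hvv : v ⬝ᵥ v = 1)
    (huv : u ⬝ᵥ v = 0) (huξ : u ⬝ᵥ ξ = 0) (hvξ : v ⬝ᵥ ξ = 0) {a b s : ℝ}
    (h : a ^ 2 + s ^ 2 * (ξ ⬝ᵥ ξ) - b ^ 2 = 1) :
    ∑ j, (⟨(a • u + s • ξ) j, (b • v) j⟩ : ℂ) ^ 2 = 1 := by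
  rw [sum_mk_sq]
  refine Complex.ext ?_ ?_
  · simp only [add_dotProduct, dotProduct_add, smul_dotProduct, dotProduct_smul, smul_eq_mul,
      dotProduct_comm ξ u, huu, hvv, huξ, Complex.one_re]
    linear_combination h
  · simp only [add_dotProduct, smul_dotProduct, dotProduct_smul, smul_eq_mul,
      dotProduct_comm ξ v, huv, hvξ, Complex.one_im]
    ring

end

theorem variety_M_difference_representation_general (ξ : Fin 3 → ℝ) (R : ℝ) :
    ∃ θ θ' : Fin 3 → ℂ,
      (∑ j, θ j ^ 2 = 1) ∧ (∑ j, θ' j ^ 2 = 1) ∧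
      (∀ j, θ' j - θ j = (ξ j : ℂ)) ∧
      R ≤ Real.sqrt (∑ j, ‖θ j‖ ^ 2) := by
  obtain ⟨u, v, huu, hvv, huv, huξ, hvξ⟩ := exists_orthonormal_pair_orthogonal ξ (by simp)
  set a := √(1 + R ^ 2)
  set b := √(R ^ 2 + ξ ⬝ᵥ ξ / 4)
  have hξξ := real_dotProduct_self_nonneg ξ
  have ha : a ^ 2 = 1 + R ^ 2 := Real.sq_sqrt (by positivity)
  have hb : b ^ 2 = R ^ 2 + ξ ⬝ᵥ ξ / 4 := Real.sq_sqrt (by positivity)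
  have hM (s : ℝ) (hs : s ^ 2 = 1 / 4) : a ^ 2 + s ^ 2 * (ξ ⬝ᵥ ξ) - b ^ 2 = 1 := by
    rw [ha, hb, hs]; ring
  refine ⟨fun j => ⟨(a • u + (-1 / 2 : ℝ) • ξ) j, (b • v) j⟩,
    fun j => ⟨(a • u + (1 / 2 : ℝ) • ξ) j, (b • v) j⟩,
    sum_mk_sq_eq_one_of_orthonormal huu hvv huv huξ hvξ (hM _ (by norm_num)),
    sum_mk_sq_eq_one_of_orthonormal huu hvv huv huξ hvξ (hM _ (by norm_num)),
    fun j => Complex.ext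
      (by simp only [Pi.add_apply, Pi.smul_apply, smul_eq_mul, Complex.sub_re, Complex.ofReal_re]; ring)
      (by simp), ?_⟩
  calc R ≤ b := Real.le_sqrt_of_sq_le (by linarith)
    _ = √((b • v) ⬝ᵥ (b • v)) := by
      rw [smul_dotProduct, dotProduct_smul, hvv, smul_eq_mul, smul_eq_mul, mul_one,
        Real.sqrt_mul_self (Real.sqrt_nonneg _)]
    _ ≤ √((a • u + (-1 / 2 : ℝ) • ξ) ⬝ᵥ (a • u + (-1 / 2 : ℝ) • ξ) + (b • v) ⬝ᵥ (b • v)) :=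
      Real.sqrt_le_sqrt (le_add_of_nonneg_left (real_dotProduct_self_nonneg _))
    _ = _ := by rw [sum_norm_mk_sq]

theorem variety_M_difference_representation (ξ : Fin 3 → ℝ) (R : ℝ) (hR : 0 < R) :
    ∃ θ θ' : Fin 3 → ℂ,
      (∑ j, θ j ^ 2 = 1) ∧ (∑ j, θ' j ^ 2 = 1) ∧
      (∀ j, θ' j - θ j = (ξ j : ℂ)) ∧
      R ≤ Real.sqrt (∑ j, ‖θ j‖ ^ 2) :=
  variety_M_difference_representation_general ξ R
end

section
/- Let c, γ, b > 0 with b > a > 0 and set s := a/b ∈ (0,1). There exist constants C > 0 and δ_0 > 0 such that for all δ ∈ (0, δ_0), choosing N = N(δ) := ⌊ln(1/δ) / ln ln(1/δ)⌋, one has δ N^2 (2N)^{N+1} / (e b)^N + s^{N+1} ≤ C e^{-γ' N(δ)} where γ' := min(γ, ln(1/s)) > 0 and in fact one may take γ' = ln(b/a) provided γ ≥ ln(b/a). -/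
/-!
Write `L = log (1/δ)` and `r = L / log L ≥ N`. Since `log r = log L - log log L`, we get
`N log N ≤ r log r = L - r log log L`, and `log log L → ∞` absorbs every term linear in `N`; hence
the logarithm of the noise term `δ N² (2N)^(N+1) / (e b)^N` is at most `-γ' N` for small `δ`.
The truncation term satisfies `s^(N+1) ≤ s^N ≤ e^(-γ' N)` because `γ' ≤ log (1/s)`, so `C = 2` works.
-/

open Real Filter Topology

lemma pow_succ_le_exp_neg_mul {s g : ℝ} (hs₀ : 0 ≤ s) (hs₁ : s ≤ 1) (hs : s ≤ exp (-g))
    (N : ℕ) : s ^ (N + 1) ≤ exp (-g * N) :=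
  calc s ^ (N + 1) ≤ s ^ N := pow_le_pow_of_le_one hs₀ hs₁ N.le_succ
    _ ≤ exp (-g) ^ N := by gcongr
    _ = exp (-g * N) := by rw [mul_comm, exp_nat_mul]

lemma mul_log_add_le_of_le_div_log {L K : ℝ} {N : ℕ} (hN₀ : 0 < N) (hN : (N : ℝ) ≤ L / log L)
    (hL : 4 ≤ log L) (hK : K + 4 ≤ log (log L)) :
    N * (log N + K) + 3 * log N + log 2 ≤ L := by
  set r := L / log L
  have hN₀' : (0 : ℝ) < N := Nat.cast_pos.mpr hN₀
  have hlogL : 0 < log L := by linarith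
  have hrL : r * log L = L := div_mul_cancel₀ L hlogL.ne'
  have hLpos : 0 < L := hrL ▸ mul_pos (hN₀'.trans_le hN) hlogL
  have hlogN : log N ≤ log L - log (log L) :=
    log_div hLpos.ne' hlogL.ne' ▸ log_le_log hN₀' hN
  have hlogN' : log N ≤ N - 1 := log_le_sub_one_of_pos hN₀'
  have hlog2 : log 2 ≤ 1 := by linarith [log_le_sub_one_of_pos (zero_lt_two' ℝ)]
  calc N * (log N + K) + 3 * log N + log 2 ≤ N * (log L - 4) + 3 * (N - 1) + 1 := by
        gcongr
        linarith
    _ ≤ r * (log L - 4) + 3 * (r - 1) + 1 := by gcongr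
    _ ≤ L := by nlinarith [hN₀'.trans_le hN]

lemma eventually_mul_log_floor_div_log_le (K : ℝ) :
    ∀ᶠ L in atTop, let N := ⌊L / log L⌋₊; N * (log N + K) + 3 * log N + log 2 ≤ L := by
  filter_upwards [eventually_gt_atTop 0, tendsto_log_atTop.eventually_ge_atTop 4,
    (tendsto_log_atTop.comp tendsto_log_atTop).eventually_ge_atTop (K + 4)] with L hL₀ hL hK
  have hlogL : 0 < log L := by linarith
  have hr : 1 ≤ L / log L := by
    rw [le_div_iff₀ hlogL, one_mul]
    linarith [log_le_sub_one_of_pos hL₀]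
  exact mul_log_add_le_of_le_div_log (Nat.floor_pos.mpr hr) (Nat.floor_le (by linarith)) hL hK

lemma tendsto_log_one_div_nhdsGT_zero :
    Tendsto (fun δ : ℝ => log (1 / δ)) (𝓝[>] 0) atTop := by
  simpa only [Function.comp_def, one_div] using tendsto_log_atTop.comp tendsto_inv_nhdsGT_zero

/-- `h` is the logarithm of the claimed inequality, rearranged. -/
lemma noise_term_le_exp_neg_mul {δ b g : ℝ} {N : ℕ} (hδ : 0 < δ) (hb : 0 < b)
    (h : N * (log N + (log 2 + g - 1 - log b)) + 3 * log N + log 2 ≤ log (1 / δ)) :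
    δ * (N : ℝ) ^ 2 * (2 * (N : ℝ)) ^ (N + 1) / (exp 1 * b) ^ N ≤ exp (-g * N) := by
  rcases N.eq_zero_or_pos with rfl | hN
  · simp
  have hN' : (0 : ℝ) < N := Nat.cast_pos.mpr hN
  rw [← log_le_log_iff (by positivity) (exp_pos _), log_exp, log_div (by positivity) (by positivity),
    log_mul (by positivity) (by positivity), log_mul (by positivity) (by positivity),
    log_pow, log_pow, log_pow, log_mul two_ne_zero hN'.ne', log_mul (exp_ne_zero 1) hb.ne',
    log_exp]
  rw [one_div, log_inv] at h
  push_cast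
  linear_combination h

theorem noisy_data_minimization_general (a b γ : ℝ) (ha : 0 < a) (hab : a < b) :
    ∃ C > (0 : ℝ), ∃ δ₀ > (0 : ℝ),
      ∀ δ : ℝ, 0 < δ → δ < δ₀ →
        (let s : ℝ := a / b
         let N : ℕ := ⌊Real.log (1 / δ) / Real.log (Real.log (1 / δ))⌋₊
         δ * (N : ℝ) ^ 2 * (2 * (N : ℝ)) ^ (N + 1) / (Real.exp 1 * b) ^ N + s ^ (N + 1) ≤
            C * Real.exp (-(min γ (Real.log (b / a))) * N) ∧
          (Real.log (b / a) ≤ γ →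
            δ * (N : ℝ) ^ 2 * (2 * (N : ℝ)) ^ (N + 1) / (Real.exp 1 * b) ^ N + s ^ (N + 1) ≤
              C * Real.exp (-(Real.log (b / a)) * N))) := by
  have hb : 0 < b := ha.trans hab
  set g := min γ (log (b / a))
  have hs : a / b ≤ exp (-g) := by
    calc a / b = exp (-log (b / a)) := by rw [exp_neg, exp_log (div_pos hb ha), inv_div]
      _ ≤ exp (-g) := by gcongr; exact min_le_right _ _
  have hbound : ∀ᶠ δ in 𝓝[>] 0, let N := ⌊log (1 / δ) / log (log (1 / δ))⌋₊;
      δ * (N : ℝ) ^ 2 * (2 * (N : ℝ)) ^ (N + 1) / (exp 1 * b) ^ N + (a / b) ^ (N + 1) ≤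
        2 * exp (-g * N) := by
    filter_upwards [self_mem_nhdsWithin,
      tendsto_log_one_div_nhdsGT_zero.eventually
        (eventually_mul_log_floor_div_log_le (log 2 + g - 1 - log b))] with δ hδ hN N
    exact (add_le_add (noise_term_le_exp_neg_mul hδ hb hN)
      (pow_succ_le_exp_neg_mul (div_pos ha hb).le ((div_le_one hb).mpr hab.le) hs N)).trans_eq
        (two_mul _).symm
  obtain ⟨δ₀, hδ₀, hsub⟩ := mem_nhdsGT_iff_exists_Ioo_subset.mp hbound
  refine ⟨2, two_pos, δ₀, hδ₀, fun δ hδ hδδ₀ => ?_⟩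
  have h := hsub ⟨hδ, hδδ₀⟩
  exact ⟨h, fun hle => by rwa [show g = log (b / a) from min_eq_right hle] at h⟩

theorem noisy_data_minimization (a b γ : ℝ) (ha : 0 < a) (hab : a < b) (hγ : 0 < γ) :
    ∃ C > (0 : ℝ), ∃ δ₀ > (0 : ℝ),
      ∀ δ : ℝ, 0 < δ → δ < δ₀ →
        (let s : ℝ := a / b
         let N : ℕ := ⌊Real.log (1 / δ) / Real.log (Real.log (1 / δ))⌋₊
         δ * (N : ℝ) ^ 2 * (2 * (N : ℝ)) ^ (N + 1) / (Real.exp 1 * b) ^ N + s ^ (N + 1) ≤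
            C * Real.exp (-(min γ (Real.log (b / a))) * N) ∧
          (Real.log (b / a) ≤ γ →
            δ * (N : ℝ) ^ 2 * (2 * (N : ℝ)) ^ (N + 1) / (Real.exp 1 * b) ^ N + s ^ (N + 1) ≤
              C * Real.exp (-(Real.log (b / a)) * N))) :=
  noisy_data_minimization_general a b γ ha hab
end
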